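/- arXiv:2409.18948 — 2 statements merged into one kernel-verified Lean document; each statement's English description precedes it below -/
import Mathlib

section
/- Let H₁, H₂ be finite-dimensional complex Hilbert spaces and k a positive integer. A symmetric tensor v ∈ S^k(H₁ ⊗ H₂) lies in the span of {(ψ₁ ⊗ ψ₂)^{⊗k} : ψᵢ ∈ Hᵢ} if and only if v ∈ S^k(H₁) ⊗ S^k(H₂), under the canonical isomorphism (H₁ ⊗ H₂)^{⊗k} ≅ H₁^{⊗k} ⊗ H₂^{⊗k}. -/
open Finset

private lemma sum_pow_c {α : Type*} [DecidableEq α] {x : Finset α} :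
    ∑ S ∈ x.powerset, (-1:ℂ)^S.card = if x = ∅ then 1 else 0 := by
  have h := Finset.sum_powerset_neg_one_pow_card (x := x)
  calc (∑ S ∈ x.powerset, (-1:ℂ)^S.card)
      = ((∑ S ∈ x.powerset, (-1:ℤ)^S.card : ℤ) : ℂ) := by push_cast; rfl
    _ = _ := by rw [h]; split_ifs <;> simp

private lemma coeff_surj {m : ℕ} (φ : Fin m → Fin m) :
    ∑ S : Finset (Fin m), (-1:ℂ)^(m - S.card) * (if ∀ t, φ t ∈ S then 1 else 0)
      = if Function.Surjective φ then 1 else 0 := by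
  have hb : Function.Bijective (fun S : Finset (Fin m) => Sᶜ) := compl_involutive.bijective
  rw [← hb.sum_comp (fun S => (-1:ℂ)^(m - S.card) * (if ∀ t, φ t ∈ S then 1 else 0))]
  have h1 : ∀ S : Finset (Fin m), m - Sᶜ.card = S.card := by
    intro S
    have := Finset.card_le_univ S
    rw [Finset.card_compl]
    simp only [Fintype.card_fin] at *
    omega
  have h2 : ∀ S : Finset (Fin m), (∀ t, φ t ∈ Sᶜ) ↔ S ∈ ((Finset.image φ univ)ᶜ).powerset := by
    intro S
    simp only [Finset.mem_powerset, Finset.mem_compl, Finset.subset_iff, Finset.mem_image,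
      Finset.mem_univ, true_and]
    constructor
    · rintro h i hi ⟨t, ht⟩
      exact h t (ht ▸ hi)
    · intro h t ht
      exact h ht ⟨t, rfl⟩
  simp only [h1, h2, mul_ite, mul_one, mul_zero]
  rw [Finset.sum_ite_mem, Finset.univ_inter, sum_pow_c]
  refine if_congr ?_ rfl rfl
  rw [Finset.compl_eq_empty_iff]
  constructor
  · intro h i
    have : i ∈ Finset.image φ univ := by rw [h]; exact Finset.mem_univ i
    simpa using this
  · intro h
    apply Finset.eq_univ_iff_forall.2
    intro i
    simpa using h i

private lemma polar {m n : ℕ} (a : Fin m → Fin n → ℂ) (y : Fin m → Fin n) :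
    ∑ S : Finset (Fin m), (-1:ℂ)^(m - S.card) * ∏ t, (∑ i ∈ S, a i (y t))
      = ∑ σ : Equiv.Perm (Fin m), ∏ t, a (σ t) (y t) := by
  classical
  have expand : ∀ S : Finset (Fin m), (∏ t, ∑ i ∈ S, a i (y t))
      = ∑ φ : Fin m → Fin m, (if ∀ t, φ t ∈ S then (1:ℂ) else 0) * ∏ t, a (φ t) (y t) := by
    intro S
    have h1 : ∀ t, (∑ i ∈ S, a i (y t))
        = ∑ i : Fin m, (if i ∈ S then (1:ℂ) else 0) * a i (y t) := by
      intro t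
      simp only [ite_mul, one_mul, zero_mul]
      rw [Finset.sum_ite_mem, Finset.univ_inter]
    calc (∏ t, ∑ i ∈ S, a i (y t))
        = ∏ t, ∑ i : Fin m, (if i ∈ S then (1:ℂ) else 0) * a i (y t) := by
          exact Finset.prod_congr rfl fun t _ => h1 t
      _ = ∑ φ ∈ Fintype.piFinset (fun _ : Fin m => (univ : Finset (Fin m))),
            ∏ t, (if φ t ∈ S then (1:ℂ) else 0) * a (φ t) (y t) := by
          rw [Finset.prod_univ_sum]
      _ = ∑ φ : Fin m → Fin m, (if ∀ t, φ t ∈ S then (1:ℂ) else 0) * ∏ t, a (φ t) (y t) := by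
          rw [Fintype.piFinset_univ]
          refine Finset.sum_congr rfl fun φ _ => ?_
          rw [Finset.prod_mul_distrib, Finset.prod_boole]
          simp
  calc ∑ S : Finset (Fin m), (-1:ℂ)^(m - S.card) * ∏ t, (∑ i ∈ S, a i (y t))
      = ∑ S : Finset (Fin m), ∑ φ : Fin m → Fin m,
          ((-1:ℂ)^(m - S.card) * (if ∀ t, φ t ∈ S then (1:ℂ) else 0)) * ∏ t, a (φ t) (y t) := by
        refine Finset.sum_congr rfl fun S _ => ?_
        rw [expand S, Finset.mul_sum]
        exact Finset.sum_congr rfl fun φ _ => by ring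
    _ = ∑ φ : Fin m → Fin m,
          (∑ S : Finset (Fin m), (-1:ℂ)^(m - S.card) * (if ∀ t, φ t ∈ S then (1:ℂ) else 0))
            * ∏ t, a (φ t) (y t) := by
        rw [Finset.sum_comm]
        exact Finset.sum_congr rfl fun φ _ => by rw [Finset.sum_mul]
    _ = ∑ φ : Fin m → Fin m,
          (if Function.Surjective φ then (1:ℂ) else 0) * ∏ t, a (φ t) (y t) := by
        refine Finset.sum_congr rfl fun φ _ => ?_
        rw [coeff_surj]
    _ = ∑ φ ∈ Finset.univ.filter (fun φ : Fin m → Fin m => Function.Surjective φ),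
          ∏ t, a (φ t) (y t) := by
        rw [Finset.sum_filter]
        simp [ite_mul]
    _ = ∑ σ : Equiv.Perm (Fin m), ∏ t, a (σ t) (y t) := by
        have himg : Finset.univ.filter (fun φ : Fin m → Fin m => Function.Surjective φ)
            = Finset.image (fun σ : Equiv.Perm (Fin m) => ⇑σ) Finset.univ := by
          ext φ
          simp only [Finset.mem_filter, Finset.mem_univ, true_and, Finset.mem_image]
          constructor
          · intro h
            exact ⟨Equiv.ofBijective φ (Finite.surjective_iff_bijective.mp h), rfl⟩
          · rintro ⟨σ, rfl⟩
            exact σ.surjective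
        rw [himg, Finset.sum_image (fun σ _ τ _ h => Equiv.coe_fn_injective h)]

private lemma mem_span_sym {n₁ n₂ m : ℕ}
    (a : Fin m → Fin n₁ → ℂ) (b : Fin m → Fin n₂ → ℂ) :
    (fun x : Fin m → Fin n₁ × Fin n₂ =>
        (∑ σ : Equiv.Perm (Fin m), ∏ t, a (σ t) (x t).1)
          * (∑ τ : Equiv.Perm (Fin m), ∏ t, b (τ t) (x t).2))
      ∈ Submodule.span ℂ
        {w : (Fin m → Fin n₁ × Fin n₂) → ℂ |
          ∃ (c : Fin n₁ → ℂ) (d : Fin n₂ → ℂ),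
            w = fun x => ∏ t, (c (x t).1 * d (x t).2)} := by
  classical
  have key : (fun x : Fin m → Fin n₁ × Fin n₂ =>
      (∑ σ : Equiv.Perm (Fin m), ∏ t, a (σ t) (x t).1)
        * (∑ τ : Equiv.Perm (Fin m), ∏ t, b (τ t) (x t).2))
    = ∑ S : Finset (Fin m), ∑ T : Finset (Fin m),
        ((-1:ℂ)^(m - S.card) * (-1:ℂ)^(m - T.card)) •
          (fun x : Fin m → Fin n₁ × Fin n₂ =>
            ∏ t, ((∑ i ∈ S, a i (x t).1) * (∑ j ∈ T, b j (x t).2))) := by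
    funext x
    rw [← polar a (fun t => (x t).1), ← polar b (fun t => (x t).2)]
    simp only [Finset.sum_apply, Pi.smul_apply, smul_eq_mul, Finset.prod_mul_distrib]
    rw [Finset.sum_mul_sum]
    refine Finset.sum_congr rfl fun S _ => Finset.sum_congr rfl fun T _ => by ring
  rw [key]
  refine Submodule.sum_mem _ fun S _ => Submodule.sum_mem _ fun T _ => Submodule.smul_mem _ _ ?_
  exact Submodule.subset_span
    ⟨fun i₁ => ∑ i ∈ S, a i i₁, fun i₂ => ∑ j ∈ T, b j i₂, rfl⟩

/-- A symmetric tensor `v ∈ S^k(H₁ ⊗ H₂)` lies in `span{(ψ₁ ⊗ ψ₂)^{⊗k}}` if and only if it lies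
in `S^k(H₁) ⊗ S^k(H₂)` under the canonical isomorphism `(H₁ ⊗ H₂)^{⊗k} ≅ H₁^{⊗k} ⊗ H₂^{⊗k}`.
Tensors over `H₁ ⊗ H₂` are realized as functions on multi-indices valued in pairs; membership in
`S^k(H₁) ⊗ S^k(H₂)` is expressed as invariance under independent permutations of the two groups
of tensor slots.  (The positive integer `k` is encoded as `k+1`.) -/
theorem stmt4 {n₁ n₂ k : ℕ}
    (v : (Fin (k + 1) → Fin n₁ × Fin n₂) → ℂ)
    (hsym : ∀ σ : Equiv.Perm (Fin (k + 1)), ∀ x, v (x ∘ σ) = v x) :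
    v ∈ Submodule.span ℂ
        {w : (Fin (k + 1) → Fin n₁ × Fin n₂) → ℂ |
          ∃ (a : Fin n₁ → ℂ) (b : Fin n₂ → ℂ),
            w = fun x => ∏ t, (a (x t).1 * b (x t).2)} ↔
      ∀ (σ τ : Equiv.Perm (Fin (k + 1))) (f : Fin (k + 1) → Fin n₁)
          (g : Fin (k + 1) → Fin n₂),
        v (fun t => (f (σ t), g (τ t))) = v fun t => (f t, g t) := by
  classical
  constructor
  · -- forward: elements of the span are bi-symmetric
    intro hv
    set N : Submodule ℂ ((Fin (k + 1) → Fin n₁ × Fin n₂) → ℂ) :=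
      { carrier := {w | ∀ (σ τ : Equiv.Perm (Fin (k + 1))) (f : Fin (k + 1) → Fin n₁)
            (g : Fin (k + 1) → Fin n₂),
            w (fun t => (f (σ t), g (τ t))) = w (fun t => (f t, g t))}
        add_mem' := by
          intro p q hp hq σ τ f g
          simp only [Pi.add_apply, hp σ τ f g, hq σ τ f g]
        zero_mem' := fun σ τ f g => rfl
        smul_mem' := by
          intro c p hp σ τ f g
          simp only [Pi.smul_apply, hp σ τ f g] } with hN
    have hle : Submodule.span ℂ
        {w : (Fin (k + 1) → Fin n₁ × Fin n₂) → ℂ |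
          ∃ (a : Fin n₁ → ℂ) (b : Fin n₂ → ℂ),
            w = fun x => ∏ t, (a (x t).1 * b (x t).2)} ≤ N := by
      rw [Submodule.span_le]
      rintro w ⟨a, b, rfl⟩ σ τ f g
      simp only
      rw [Finset.prod_mul_distrib, Finset.prod_mul_distrib,
        Equiv.prod_comp σ (fun t => a (f t)), Equiv.prod_comp τ (fun t => b (g t))]
    exact hle hv
  · -- backward: bi-symmetric tensors lie in the span
    intro h
    have key : (((k + 1).factorial : ℂ))^2 • v
        = ∑ x₀ : Fin (k + 1) → Fin n₁ × Fin n₂, v x₀ •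
          (fun x : Fin (k + 1) → Fin n₁ × Fin n₂ =>
            (∑ σ : Equiv.Perm (Fin (k + 1)),
                ∏ t, (if (x₀ (σ t)).1 = (x t).1 then (1:ℂ) else 0))
              * (∑ τ : Equiv.Perm (Fin (k + 1)),
                ∏ t, (if (x₀ (τ t)).2 = (x t).2 then (1:ℂ) else 0))) := by
      funext x
      simp only [Finset.sum_apply, Pi.smul_apply, smul_eq_mul]
      have step1 : ∀ x₀ : Fin (k + 1) → Fin n₁ × Fin n₂,
          v x₀ * ((∑ σ : Equiv.Perm (Fin (k + 1)),
              ∏ t, (if (x₀ (σ t)).1 = (x t).1 then (1:ℂ) else 0))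
            * (∑ τ : Equiv.Perm (Fin (k + 1)),
              ∏ t, (if (x₀ (τ t)).2 = (x t).2 then (1:ℂ) else 0)))
          = ∑ σ : Equiv.Perm (Fin (k + 1)), ∑ τ : Equiv.Perm (Fin (k + 1)),
              v x₀ * (if x₀ = (fun s => ((x (σ.symm s)).1, (x (τ.symm s)).2))
                then (1:ℂ) else 0) := by
        intro x₀
        rw [Finset.sum_mul_sum, Finset.mul_sum]
        refine Finset.sum_congr rfl fun σ _ => ?_
        rw [Finset.mul_sum]
        refine Finset.sum_congr rfl fun τ _ => ?_
        congr 1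
        rw [Finset.prod_boole, Finset.prod_boole]
        have hiff : ((∀ t ∈ Finset.univ, (x₀ (σ t)).1 = (x t).1)
            ∧ (∀ t ∈ Finset.univ, (x₀ (τ t)).2 = (x t).2))
            ↔ x₀ = (fun s => ((x (σ.symm s)).1, (x (τ.symm s)).2)) := by
          constructor
          · rintro ⟨h1, h2⟩
            funext s
            refine Prod.ext ?_ ?_
            · have := h1 (σ.symm s) (Finset.mem_univ _)
              simpa using this
            · have := h2 (τ.symm s) (Finset.mem_univ _)
              simpa using this
          · rintro rfl
            refine ⟨fun t _ => ?_, fun t _ => ?_⟩ <;> simp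
        simp only [Finset.mem_univ, true_implies] at hiff ⊢
        by_cases hA : ∀ t, (x₀ (σ t)).1 = (x t).1 <;>
          by_cases hB : ∀ t, (x₀ (τ t)).2 = (x t).2 <;>
          simp [hA, hB, ← hiff]
      calc (((k + 1).factorial : ℂ))^2 * v x
          = ∑ _σ : Equiv.Perm (Fin (k + 1)), ∑ _τ : Equiv.Perm (Fin (k + 1)), v x := by
            simp [Finset.sum_const, Finset.card_univ, Fintype.card_perm, nsmul_eq_mul]
            ring
        _ = ∑ σ : Equiv.Perm (Fin (k + 1)), ∑ τ : Equiv.Perm (Fin (k + 1)),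
              v (fun s => ((x (σ.symm s)).1, (x (τ.symm s)).2)) := by
            refine Finset.sum_congr rfl fun σ _ => Finset.sum_congr rfl fun τ _ => ?_
            exact (h σ.symm τ.symm (fun t => (x t).1) (fun t => (x t).2)).symm
        _ = ∑ σ : Equiv.Perm (Fin (k + 1)), ∑ τ : Equiv.Perm (Fin (k + 1)),
              ∑ x₀ : Fin (k + 1) → Fin n₁ × Fin n₂,
                v x₀ * (if x₀ = (fun s => ((x (σ.symm s)).1, (x (τ.symm s)).2))
                  then (1:ℂ) else 0) := by
            refine Finset.sum_congr rfl fun σ _ => Finset.sum_congr rfl fun τ _ => ?_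
            simp only [mul_ite, mul_one, mul_zero]
            rw [Finset.sum_ite_eq' Finset.univ _ v]
            simp
        _ = ∑ σ : Equiv.Perm (Fin (k + 1)),
              ∑ x₀ : Fin (k + 1) → Fin n₁ × Fin n₂,
              ∑ τ : Equiv.Perm (Fin (k + 1)),
                v x₀ * (if x₀ = (fun s => ((x (σ.symm s)).1, (x (τ.symm s)).2))
                  then (1:ℂ) else 0) :=
            Finset.sum_congr rfl fun σ _ => Finset.sum_comm
        _ = ∑ x₀ : Fin (k + 1) → Fin n₁ × Fin n₂,
              ∑ σ : Equiv.Perm (Fin (k + 1)), ∑ τ : Equiv.Perm (Fin (k + 1)),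
                v x₀ * (if x₀ = (fun s => ((x (σ.symm s)).1, (x (τ.symm s)).2))
                  then (1:ℂ) else 0) := Finset.sum_comm
        _ = ∑ x₀ : Fin (k + 1) → Fin n₁ × Fin n₂,
              v x₀ * ((∑ σ : Equiv.Perm (Fin (k + 1)),
                  ∏ t, (if (x₀ (σ t)).1 = (x t).1 then (1:ℂ) else 0))
                * (∑ τ : Equiv.Perm (Fin (k + 1)),
                  ∏ t, (if (x₀ (τ t)).2 = (x t).2 then (1:ℂ) else 0))) :=
            Finset.sum_congr rfl fun x₀ _ => (step1 x₀).symm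
    have hne : (((k + 1).factorial : ℂ))^2 ≠ 0 := by
      apply pow_ne_zero
      exact_mod_cast Nat.cast_ne_zero.mpr (k + 1).factorial_ne_zero
    have hv : v = ((((k + 1).factorial : ℂ))^2)⁻¹ • ((((k + 1).factorial : ℂ))^2 • v) := by
      rw [smul_smul, inv_mul_cancel₀ hne, one_smul]
    rw [hv, key]
    refine Submodule.smul_mem _ _ (Submodule.sum_mem _ fun x₀ _ => Submodule.smul_mem _ _ ?_)
    exact mem_span_sym (fun t i => if (x₀ t).1 = i then (1:ℂ) else 0)
      (fun t j => if (x₀ t).2 = j then (1:ℂ) else 0)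
end

section
/- Let H be a finite-dimensional complex Hilbert space, U ⊆ H a subspace, and k a positive integer. Then (U ⊗ H^{⊗(k−1)}) ∩ S^k(H) = S^k(U), where S^k(U) denotes the symmetric subspace of U^{⊗k} viewed inside H^{⊗k}. -/
/-!
A symmetric tensor whose first factor lies in `U` has its factor in every slot in `U`, by permuting
slots. A tensor `v` with all factors in `U` lies in `U^{⊗m}` by induction on `m`: applying a
projection onto `U` to the first slot leaves `v` unchanged and writes it as
`∑ a, P(e_a) ⊗ v(a, ·)`, and each coefficient tensor `v(a, ·)` again has all its factors in `U`.
-/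

noncomputable section

/-- The symmetric subspace `S^m(H) ⊆ H^{⊗m}`. -/
def symSpace (n m : ℕ) : Submodule ℂ ((Fin m → Fin n) → ℂ) where
  carrier := {v | ∀ σ : Equiv.Perm (Fin m), ∀ x, v (x ∘ σ) = v x}
  add_mem' := by
    intro a b ha hb σ x
    simp [ha σ x, hb σ x]
  zero_mem' := by intro σ x; rfl
  smul_mem' := by
    intro c a ha σ x
    simp [ha σ x]

open Function

section

variable {K α : Type*} [Field K] {U : Submodule K (α → K)}

/-- The tensors in `(α → K)^{⊗ι}` whose factor in slot `t` lies in `U`. -/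
def slotSubmodule {ι : Type*} [DecidableEq ι] (U : Submodule K (α → K)) (t : ι) :
    Submodule K ((ι → α) → K) where
  carrier := {v | ∀ y, (fun a => v (update y t a)) ∈ U}
  add_mem' hv hw y := U.add_mem (hv y) (hw y)
  zero_mem' _ := U.zero_mem
  smul_mem' c _ hv y := U.smul_mem c (hv y)

def tensorPowerSpan (ι : Type*) [Fintype ι] (U : Submodule K (α → K)) :
    Submodule K ((ι → α) → K) :=
  Submodule.span K {v | ∃ u : ι → α → K, (∀ t, u t ∈ U) ∧ v = fun x => ∏ t, u t (x t)}

lemma span_firstFactor_le_slotSubmodule_zero (m : ℕ) :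
    Submodule.span K {v : (Fin (m + 1) → α) → K |
        ∃ u : α → K, u ∈ U ∧ ∃ w : (Fin m → α) → K, v = fun x => u (x 0) * w (Fin.tail x)} ≤
      slotSubmodule U 0 := by
  refine Submodule.span_le.mpr ?_
  rintro _ ⟨u, hu, w, rfl⟩ y
  convert U.smul_mem (w (Fin.tail y)) hu using 1
  funext a
  simp [Fin.tail_update_zero, mul_comm]

lemma tensorPowerSpan_le_span_firstFactor (m : ℕ) :
    tensorPowerSpan (Fin (m + 1)) U ≤
      Submodule.span K {v : (Fin (m + 1) → α) → K |
        ∃ u : α → K, u ∈ U ∧ ∃ w : (Fin m → α) → K, v = fun x => u (x 0) * w (Fin.tail x)} :=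
  Submodule.span_mono <| by
    rintro _ ⟨u, hu, rfl⟩
    exact ⟨u 0, hu 0, fun z => ∏ t, u t.succ (z t), funext fun x => Fin.prod_univ_succ _⟩

lemma cons_mul_mem_tensorPowerSpan {m : ℕ} {u : α → K} (hu : u ∈ U) {w : (Fin m → α) → K}
    (hw : w ∈ tensorPowerSpan (Fin m) U) :
    (fun x => u (x 0) * w (Fin.tail x)) ∈ tensorPowerSpan (Fin (m + 1)) U := by
  induction hw using Submodule.span_induction with
  | mem _ h =>
    obtain ⟨u', hu', rfl⟩ := h
    refine Submodule.subset_span ⟨Fin.cons u u', Fin.cases hu hu', funext fun x => ?_⟩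
    simp [Fin.prod_univ_succ, Fin.tail]
  | zero =>
    convert (tensorPowerSpan (Fin (m + 1)) U).zero_mem using 1
    funext x
    simp
  | add _ _ _ _ h₁ h₂ =>
    convert add_mem h₁ h₂ using 1
    funext x
    simp [mul_add]
  | smul c _ _ h =>
    convert Submodule.smul_mem _ c h using 1
    funext x
    simp [mul_left_comm]

lemma mem_tensorPowerSpan_of_forall_mem_slotSubmodule [Fintype α] [DecidableEq α] {m : ℕ}
    {v : (Fin m → α) → K} (hv : ∀ t, v ∈ slotSubmodule U t) : v ∈ tensorPowerSpan (Fin m) U := by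
  induction m with
  | zero =>
    have hconst : v = v Fin.elim0 • fun x => ∏ t, (Fin.elim0 : Fin 0 → α → K) t (x t) := by
      funext x
      simp [Subsingleton.elim x Fin.elim0]
    rw [hconst]
    exact Submodule.smul_mem _ _ (Submodule.subset_span ⟨_, fun t => t.elim0, rfl⟩)
  | succ m ih =>
    obtain ⟨q, hq⟩ := U.exists_isCompl
    have hsplit : v = ∑ a, fun x =>
        U.projection q hq (fun b => if a = b then 1 else 0) (x 0) * v (Fin.cons a (Fin.tail x)) := by
      funext x
      have hslice : (fun b => v (Fin.cons b (Fin.tail x))) ∈ U := by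
        have h := hv 0 x
        rw [← Fin.cons_self_tail x] at h
        simpa only [Fin.update_cons_zero] using h
      calc v x = (fun b => v (Fin.cons b (Fin.tail x))) (x 0) :=
          (congrArg v (Fin.cons_self_tail x)).symm
        _ = U.projection q hq (fun b => v (Fin.cons b (Fin.tail x))) (x 0) := by
          rw [Submodule.projection_apply_of_mem_left hq hslice]
        _ = _ := by
          rw [LinearMap.pi_apply_eq_sum_univ]
          simp [Finset.sum_apply, mul_comm]
    rw [hsplit]
    refine sum_mem fun a _ => cons_mul_mem_tensorPowerSpan (U.projection_apply_mem hq _)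
      (w := fun z => v (Fin.cons a z)) ?_
    refine ih fun t y => ?_
    simpa [Fin.cons_update] using hv t.succ (Fin.cons a y)

end

lemma mem_slotSubmodule_of_mem_symSpace {n m : ℕ} {U : Submodule ℂ (Fin n → ℂ)}
    {v : (Fin m → Fin n) → ℂ} (hsym : v ∈ symSpace n m) {s : Fin m}
    (hs : v ∈ slotSubmodule U s) (t : Fin m) : v ∈ slotSubmodule U t := by
  intro y
  convert hs (y ∘ Equiv.swap s t) using 2 with a
  rw [← hsym (Equiv.swap s t), update_comp_equiv, Equiv.symm_swap, Equiv.swap_apply_right]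

/-- `(U ⊗ H^{⊗(k−1)}) ∩ S^k(H) = S^k(U)`, where `S^k(U)` is the symmetric subspace of
`U^{⊗k}` viewed inside `H^{⊗k}`.  (The positive integer `k` is encoded as `k+1`; the subspace
`U ⊗ H^{⊗k}` is spanned by tensors whose first factor lies in `U`, and `U^{⊗(k+1)}` is spanned
by elementary tensors of vectors of `U`.) -/
theorem stmt13 {n k : ℕ} (U : Submodule ℂ (Fin n → ℂ)) :
    (Submodule.span ℂ {v : (Fin (k + 1) → Fin n) → ℂ |
        ∃ u : Fin n → ℂ, u ∈ U ∧ ∃ w : (Fin k → Fin n) → ℂ,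
          v = fun x => u (x 0) * w (Fin.tail x)}) ⊓ symSpace n (k + 1) =
      (Submodule.span ℂ {v : (Fin (k + 1) → Fin n) → ℂ |
        ∃ u : Fin (k + 1) → (Fin n → ℂ), (∀ t, u t ∈ U) ∧
          v = fun x => ∏ t, u t (x t)}) ⊓ symSpace n (k + 1) := by
  refine le_antisymm (fun v ⟨hfirst, hsym⟩ => ⟨?_, hsym⟩)
    (inf_le_inf_right _ (tensorPowerSpan_le_span_firstFactor k))
  have hslot0 := span_firstFactor_le_slotSubmodule_zero k hfirst
  exact mem_tensorPowerSpan_of_forall_mem_slotSubmodule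
    (mem_slotSubmodule_of_mem_symSpace hsym hslot0)
end
end
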